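/- Let A ∈ ℝ^{m×n}, let K ≥ 1 be an integer, and suppose δ ∈ [0,1) satisfies the RIP of order K+1 for A. Let x ∈ ℝⁿ be K-sparse with nonempty support Ω = supp(x), let v ∈ ℝ^m satisfy ‖v‖₂ ≤ ε, and let S ⊊ Ω with |S| < |Ω|. Then ‖P_S^⊥(Ax + v)‖₂ ≥ √(1−δ) · min_{i∈Ω}|x_i| − ε. Consequently, if min_{i∈Ω}|x_i| > 2ε/√(1−δ), then ‖P_S^⊥(Ax + v)‖₂ > ε. -/

import Mathlib

open Matrix Finset

/-- The Euclidean (`ℓ₂`) norm of a real vector. -/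
noncomputable def l2norm {ι : Type*} [Fintype ι] (v : ι → ℝ) : ℝ :=
  Real.sqrt (∑ i, v i ^ 2)

/-- The support `{i : x i ≠ 0}` of a vector, as a `Finset`. -/
noncomputable def sparseSupport {n : ℕ} (x : Fin n → ℝ) : Finset (Fin n) :=
  Finset.univ.filter (fun i => x i ≠ 0)

/-- `δ` satisfies the restricted isometry property of order `k` for `A`:
`(1-δ)‖x‖₂² ≤ ‖Ax‖₂² ≤ (1+δ)‖x‖₂²` for all `x` with at most `k` nonzero entries. -/
def RIP {m n : ℕ} (A : Matrix (Fin m) (Fin n) ℝ) (k : ℕ) (δ : ℝ) : Prop :=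
  ∀ x : Fin n → ℝ, (sparseSupport x).card ≤ k →
    (1 - δ) * (∑ i, x i ^ 2) ≤ (∑ i, (A.mulVec x) i ^ 2) ∧
    (∑ i, (A.mulVec x) i ^ 2) ≤ (1 + δ) * (∑ i, x i ^ 2)

/-- The submatrix `A_S` of `A` containing only the columns indexed by `S`. -/
def colSub {m n : ℕ} (A : Matrix (Fin m) (Fin n) ℝ) (S : Finset (Fin n)) :
    Matrix (Fin m) {j // j ∈ S} ℝ :=
  fun i j => A i j.1

/-- The orthogonal complement projector `P_S^⊥ = I - A_S (A_Sᵀ A_S)⁻¹ A_Sᵀ`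
(equal to `I` when `S = ∅`). -/
noncomputable def projPerp {m n : ℕ} (A : Matrix (Fin m) (Fin n) ℝ) (S : Finset (Fin n)) :
    Matrix (Fin m) (Fin m) ℝ :=
  1 - colSub A S * ((colSub A S)ᵀ * colSub A S)⁻¹ * (colSub A S)ᵀ

/-- The subvector `x_T`, extended by zero outside `T` (so that `A_T x_T = A (restrictVec x T)`). -/
def restrictVec {n : ℕ} (x : Fin n → ℝ) (T : Finset (Fin n)) : Fin n → ℝ :=
  fun i => if i ∈ T then x i else 0

/-- `‖(w i)_{i ∈ T}‖_∞ = max_{i ∈ T} |w i|` (equal to `0` when `T = ∅`). -/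
noncomputable def supAbs {n : ℕ} (T : Finset (Fin n)) (w : Fin n → ℝ) : ℝ :=
  sSup ((fun i => |w i|) '' ↑T)

/-!
`P_S^⊥ (A x)` equals `A z` for `z = x - x'` with `x'` supported on `S`, so `z` is supported on
`Ω` and agrees with `x` on the nonempty set `Ω \ S`; the lower RIP bound then gives
`‖P_S^⊥ (A x)‖₂ ≥ √(1-δ) ‖z‖₂ ≥ √(1-δ) min_{i∈Ω} |x_i|`. The same lower bound makes the Gram
matrix `A_Sᵀ A_S` invertible, so `P_S^⊥` is an orthogonal projection and `‖P_S^⊥ v‖₂ ≤ ε`.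
The theorem follows from the triangle inequality.
-/

section l2norm

variable {ι : Type*} [Fintype ι]

lemma l2norm_eq_norm (v : ι → ℝ) : l2norm v = ‖WithLp.toLp 2 v‖ := by
  simp [l2norm, EuclideanSpace.norm_eq, sq_abs]

lemma l2norm_eq_zero {v : ι → ℝ} : l2norm v = 0 ↔ v = 0 := by
  rw [l2norm_eq_norm, norm_eq_zero, WithLp.toLp_eq_zero]

lemma l2norm_sub_le_l2norm_add (u v : ι → ℝ) : l2norm u - l2norm v ≤ l2norm (u + v) := by
  simp only [l2norm_eq_norm, WithLp.toLp_add]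
  linarith [norm_le_add_norm_add (WithLp.toLp 2 u) (WithLp.toLp 2 v)]

lemma abs_le_l2norm (v : ι → ℝ) (i : ι) : |v i| ≤ l2norm v := by
  rw [← Real.sqrt_sq_eq_abs]
  exact Real.sqrt_le_sqrt (single_le_sum (f := fun j => v j ^ 2) (fun j _ => sq_nonneg _)
    (mem_univ i))

lemma sum_sq_eq_dotProduct_self (v : ι → ℝ) : ∑ i, v i ^ 2 = v ⬝ᵥ v := by
  simp [dotProduct, sq]

end l2norm

section Projection

variable {ι κ : Type*} [Fintype ι] [Fintype κ] [DecidableEq κ]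

lemma dotProduct_mulVec_self_of_isSymm_of_isIdempotentElem {Q : Matrix ι ι ℝ} (hsymm : Q.IsSymm)
    (hidem : IsIdempotentElem Q) (w : ι → ℝ) : (Q *ᵥ w) ⬝ᵥ (Q *ᵥ w) = w ⬝ᵥ (Q *ᵥ w) := by
  rw [dotProduct_mulVec, ← mulVec_transpose, mulVec_mulVec, hsymm.eq, hidem.eq, dotProduct_comm]

lemma l2norm_one_sub_mulVec_le [DecidableEq ι] {P : Matrix ι ι ℝ} (hsymm : P.IsSymm)
    (hidem : IsIdempotentElem P) (w : ι → ℝ) : l2norm ((1 - P) *ᵥ w) ≤ l2norm w := by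
  have hsymm' : (1 - P).IsSymm := by
    rw [IsSymm, transpose_sub, transpose_one, hsymm.eq]
  have hsq : ∑ i, ((1 - P) *ᵥ w) i ^ 2 = ∑ i, w i ^ 2 - ∑ i, (P *ᵥ w) i ^ 2 := by
    rw [sum_sq_eq_dotProduct_self, sum_sq_eq_dotProduct_self, sum_sq_eq_dotProduct_self,
      dotProduct_mulVec_self_of_isSymm_of_isIdempotentElem hsymm' hidem.one_sub,
      dotProduct_mulVec_self_of_isSymm_of_isIdempotentElem hsymm hidem,
      sub_mulVec, one_mulVec, dotProduct_sub]
  refine Real.sqrt_le_sqrt ?_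
  rw [hsq]
  linarith [sum_nonneg fun i (_ : i ∈ univ) => sq_nonneg ((P *ᵥ w) i)]

lemma isSymm_mul_inv_gram_mul_transpose (B : Matrix ι κ ℝ) : (B * (Bᵀ * B)⁻¹ * Bᵀ).IsSymm := by
  rw [IsSymm, transpose_mul, transpose_mul, transpose_transpose, transpose_nonsing_inv,
    transpose_mul, transpose_transpose, Matrix.mul_assoc]

lemma isIdempotentElem_mul_inv_gram_mul_transpose (B : Matrix ι κ ℝ) (hB : IsUnit (Bᵀ * B).det) :
    IsIdempotentElem (B * (Bᵀ * B)⁻¹ * Bᵀ) := by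
  calc B * (Bᵀ * B)⁻¹ * Bᵀ * (B * (Bᵀ * B)⁻¹ * Bᵀ)
      = B * ((Bᵀ * B)⁻¹ * (Bᵀ * B)) * (Bᵀ * B)⁻¹ * Bᵀ := by simp only [Matrix.mul_assoc]
    _ = B * (Bᵀ * B)⁻¹ * Bᵀ := by rw [nonsing_inv_mul _ hB, Matrix.mul_one]

lemma l2norm_projPerp_mulVec_le {m n : ℕ} {A : Matrix (Fin m) (Fin n) ℝ} {S : Finset (Fin n)}
    (hS : IsUnit ((colSub A S)ᵀ * colSub A S).det) (w : Fin m → ℝ) :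
    l2norm (projPerp A S *ᵥ w) ≤ l2norm w :=
  l2norm_one_sub_mulVec_le (isSymm_mul_inv_gram_mul_transpose _)
    (isIdempotentElem_mul_inv_gram_mul_transpose _ hS) w

end Projection

section ExtendByZero

def extendByZero {α : Type*} [DecidableEq α] (S : Finset α) (c : S → ℝ) : α → ℝ :=
  fun i => if h : i ∈ S then c ⟨i, h⟩ else 0

variable {α : Type*} [DecidableEq α] {S : Finset α}

lemma extendByZero_of_notMem (c : S → ℝ) {i : α} (hi : i ∉ S) :
    extendByZero S c i = 0 :=
  dif_neg hi

lemma extendByZero_injective : Function.Injective (extendByZero S) := by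
  intro c d hcd
  funext j
  simpa [extendByZero, j.2] using congrFun hcd j

lemma extendByZero_sub (c d : S → ℝ) :
    extendByZero S (c - d) = extendByZero S c - extendByZero S d := by
  funext i
  by_cases hi : i ∈ S <;> simp [extendByZero, hi]

end ExtendByZero

section ColumnSubmatrix

variable {m n : ℕ}

lemma sparseSupport_extendByZero_subset (S : Finset (Fin n)) (c : S → ℝ) :
    sparseSupport (extendByZero S c) ⊆ S := by
  intro i hi
  by_contra hiS
  simp [sparseSupport, extendByZero_of_notMem c hiS] at hi

lemma sparseSupport_sub_extendByZero_subset {x : Fin n → ℝ} {S : Finset (Fin n)}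
    (hS : S ⊆ sparseSupport x) (c : S → ℝ) :
    sparseSupport (x - extendByZero S c) ⊆ sparseSupport x := by
  intro i hi
  by_contra hix
  have hxi : x i = 0 := by simpa [sparseSupport] using hix
  simp [sparseSupport, extendByZero_of_notMem c (fun h => hix (hS h)), hxi] at hi

lemma colSub_mulVec (A : Matrix (Fin m) (Fin n) ℝ) (S : Finset (Fin n)) (c : S → ℝ) :
    colSub A S *ᵥ c = A *ᵥ extendByZero S c := by
  funext i
  simp only [mulVec, dotProduct, colSub]
  rw [← sum_subset (subset_univ S) fun j _ hj => by simp [extendByZero_of_notMem c hj],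
    ← sum_attach S, univ_eq_attach]
  refine sum_congr rfl fun j _ => ?_
  simp [extendByZero]

lemma exists_projPerp_mulVec_mulVec_eq (A : Matrix (Fin m) (Fin n) ℝ) (S : Finset (Fin n))
    (x : Fin n → ℝ) : ∃ c : S → ℝ, projPerp A S *ᵥ (A *ᵥ x) = A *ᵥ (x - extendByZero S c) := by
  refine ⟨(((colSub A S)ᵀ * colSub A S)⁻¹ * (colSub A S)ᵀ) *ᵥ (A *ᵥ x), ?_⟩
  rw [projPerp, sub_mulVec, one_mulVec, mulVec_sub, Matrix.mul_assoc, ← mulVec_mulVec,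
    colSub_mulVec]

end ColumnSubmatrix

namespace RIP

variable {m n k : ℕ} {A : Matrix (Fin m) (Fin n) ℝ} {δ : ℝ}

lemma sqrt_mul_l2norm_le (hA : RIP A k δ) {y : Fin n → ℝ} (hy : (sparseSupport y).card ≤ k) :
    Real.sqrt (1 - δ) * l2norm y ≤ l2norm (A *ᵥ y) := by
  rw [l2norm, ← Real.sqrt_mul' _ (sum_nonneg fun i _ => sq_nonneg (y i))]
  exact Real.sqrt_le_sqrt (hA y hy).1

lemma eq_zero_of_mulVec_eq_zero (hA : RIP A k δ) (hδ : δ < 1) {y : Fin n → ℝ}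
    (hy : (sparseSupport y).card ≤ k) (hAy : A *ᵥ y = 0) : y = 0 := by
  have h := hA.sqrt_mul_l2norm_le hy
  rw [hAy, l2norm_eq_zero.2 rfl] at h
  have hpos : 0 < Real.sqrt (1 - δ) := Real.sqrt_pos.2 (sub_pos.2 hδ)
  exact l2norm_eq_zero.1 (le_antisymm (nonpos_of_mul_nonpos_right h hpos) (Real.sqrt_nonneg _))

lemma colSub_mulVec_injective (hA : RIP A k δ) (hδ : δ < 1) {S : Finset (Fin n)}
    (hS : S.card ≤ k) : Function.Injective (colSub A S *ᵥ ·) := by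
  intro c d hcd
  have hsupp := (card_le_card (sparseSupport_extendByZero_subset S (c - d))).trans hS
  have hzero : A *ᵥ extendByZero S (c - d) = 0 := by
    rw [extendByZero_sub, mulVec_sub, ← colSub_mulVec, ← colSub_mulVec]
    exact sub_eq_zero.2 hcd
  have h := hA.eq_zero_of_mulVec_eq_zero hδ hsupp hzero
  rw [extendByZero_sub, sub_eq_zero] at h
  exact extendByZero_injective h

lemma posDef_gram (hA : RIP A k δ) (hδ : δ < 1) {S : Finset (Fin n)} (hS : S.card ≤ k) :
    ((colSub A S)ᵀ * colSub A S).PosDef := by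
  simpa [conjTranspose_eq_transpose_of_trivial] using
    PosDef.conjTranspose_mul_self _ (hA.colSub_mulVec_injective hδ hS)

lemma sqrt_mul_inf'_le_l2norm_projPerp_mulVec (hA : RIP A k δ) {x : Fin n → ℝ}
    (hx : (sparseSupport x).card ≤ k) (hne : (sparseSupport x).Nonempty) {S : Finset (Fin n)}
    (hS : S ⊆ sparseSupport x) (hcard : S.card < (sparseSupport x).card) :
    Real.sqrt (1 - δ) * (sparseSupport x).inf' hne (fun i => |x i|)
      ≤ l2norm (projPerp A S *ᵥ (A *ᵥ x)) := by
  obtain ⟨c, hc⟩ := exists_projPerp_mulVec_mulVec_eq A S x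
  obtain ⟨i, hiΩ, hiS⟩ := exists_mem_notMem_of_card_lt_card hcard
  set z := x - extendByZero S c
  have hzi : z i = x i := by simp [z, extendByZero_of_notMem c hiS]
  have hz : (sparseSupport z).card ≤ k :=
    (card_le_card (sparseSupport_sub_extendByZero_subset hS c)).trans hx
  calc Real.sqrt (1 - δ) * (sparseSupport x).inf' hne (fun i => |x i|)
      ≤ Real.sqrt (1 - δ) * l2norm z := by
        gcongr
        exact (inf'_le _ hiΩ).trans (hzi ▸ abs_le_l2norm z i)
    _ ≤ l2norm (A *ᵥ z) := hA.sqrt_mul_l2norm_le hz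
    _ = l2norm (projPerp A S *ᵥ (A *ᵥ x)) := by rw [hc]

end RIP

theorem omp_residual_lower_bound_general {m n : ℕ} (A : Matrix (Fin m) (Fin n) ℝ)
    (K : ℕ)
    (δ : ℝ) (hδ1 : δ < 1) (hRIP : RIP A (K + 1) δ)
    (x : Fin n → ℝ) (hx : (sparseSupport x).card ≤ K)
    (hne : (sparseSupport x).Nonempty)
    (v : Fin m → ℝ) (ε : ℝ) (hv : l2norm v ≤ ε)
    (S : Finset (Fin n)) (hS : S ⊆ sparseSupport x)
    (hcard : S.card < (sparseSupport x).card) :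
    l2norm ((projPerp A S).mulVec (A.mulVec x + v))
      ≥ Real.sqrt (1 - δ) * (sparseSupport x).inf' hne (fun i => |x i|) - ε ∧
    ((sparseSupport x).inf' hne (fun i => |x i|) > 2 * ε / Real.sqrt (1 - δ) →
      ε < l2norm ((projPerp A S).mulVec (A.mulVec x + v))) := by
  have hΩ : (sparseSupport x).card ≤ K + 1 := hx.trans K.le_succ
  have hgram := (hRIP.posDef_gram hδ1 ((card_le_card hS).trans hΩ)).det_pos.ne'.isUnit
  have hsignal := hRIP.sqrt_mul_inf'_le_l2norm_projPerp_mulVec hΩ hne hS hcard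
  have hnoise := (l2norm_projPerp_mulVec_le hgram v).trans hv
  have hres : Real.sqrt (1 - δ) * (sparseSupport x).inf' hne (fun i => |x i|) - ε
      ≤ l2norm (projPerp A S *ᵥ (A *ᵥ x + v)) := by
    rw [mulVec_add]
    linarith [l2norm_sub_le_l2norm_add (projPerp A S *ᵥ (A *ᵥ x)) (projPerp A S *ᵥ v)]
  refine ⟨hres, fun hbig => ?_⟩
  have := (div_lt_iff₀ (Real.sqrt_pos.2 (sub_pos.2 hδ1))).1 hbig
  linarith

/-- Residual lower bound: `‖P_S^⊥(Ax+v)‖₂ ≥ √(1−δ)·min_{i∈Ω}|x_i| − ε`;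
hence if `min_{i∈Ω}|x_i| > 2ε/√(1−δ)` then `‖P_S^⊥(Ax+v)‖₂ > ε`. -/
theorem omp_residual_lower_bound {m n : ℕ} (A : Matrix (Fin m) (Fin n) ℝ)
    (K : ℕ) (hK : 1 ≤ K)
    (δ : ℝ) (hδ0 : 0 ≤ δ) (hδ1 : δ < 1) (hRIP : RIP A (K + 1) δ)
    (x : Fin n → ℝ) (hx : (sparseSupport x).card ≤ K)
    (hne : (sparseSupport x).Nonempty)
    (v : Fin m → ℝ) (ε : ℝ) (hv : l2norm v ≤ ε)
    (S : Finset (Fin n)) (hS : S ⊆ sparseSupport x)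
    (hcard : S.card < (sparseSupport x).card) :
    l2norm ((projPerp A S).mulVec (A.mulVec x + v))
      ≥ Real.sqrt (1 - δ) * (sparseSupport x).inf' hne (fun i => |x i|) - ε ∧
    ((sparseSupport x).inf' hne (fun i => |x i|) > 2 * ε / Real.sqrt (1 - δ) →
      ε < l2norm ((projPerp A S).mulVec (A.mulVec x + v))) :=
  omp_residual_lower_bound_general A K δ hδ1 hRIP x hx hne v ε hv S hS hcard
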